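/- arXiv:1002.1290 — 3 statements merged into one kernel-verified Lean document; each statement's English description precedes it below -/
import Mathlib

section
/- Let k ≥ 3, and let (t₁,t₂,t₃) be any positive solution of the saddle point system tᵢ ∂ln f/∂tᵢ = cᵢ for f(x₁,x₂,x₃) = (1+x₁+x₂+x₃)^k − (1+x₁)^k − (1+x₃)^k + 1 with c₁ = c₃. Then t₁ = t₃. -/
/-!
Along the `tᵢ`-direction (`i = 1, 3`), `f` is `(S - tᵢ + x)^k - (1 + x)^k` plus a constant, with
`S = 1 + t₁ + t₂ + t₃`, so the equations for `t₁` and `t₃` with equal right-hand sides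
give `t₁ (S^n - (1+t₁)^n) = t₃ (S^n - (1+t₃)^n)` with `n = k - 1`, once `f > 0` is known.
For `b < a` the inequality `a (1+a)^n - b (1+b)^n ≤ (a - b)(1+a+b)^n` and `1 + a + b < S`
make the left-hand side strictly smaller at `b` than at `a`, so `t₁ = t₃`.
-/

lemma one_add_pow_add_one_add_pow_le (k : ℕ) {a b : ℝ} (ha : 0 ≤ a) (hb : 0 ≤ b) :
    (1 + a) ^ k + (1 + b) ^ k ≤ (1 + a + b) ^ k + 1 := by
  induction k with
  | zero => norm_num
  | succ k ih =>
    have hak : 1 ≤ (1 + a) ^ k := one_le_pow₀ (by linarith)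
    have hbk : 1 ≤ (1 + b) ^ k := one_le_pow₀ (by linarith)
    have h := mul_le_mul_of_nonneg_left ih (by linarith : (0 : ℝ) ≤ 1 + a + b)
    simp only [pow_succ]
    nlinarith [mul_nonneg hb (sub_nonneg.2 hak), mul_nonneg ha (sub_nonneg.2 hbk)]

lemma add_pow_sub_one_add_pow_sub_one_add_pow_add_one_pos {k : ℕ} (hk : k ≠ 0) {a b c : ℝ}
    (ha : 0 ≤ a) (hb : 0 < b) (hc : 0 ≤ c) :
    0 < (1 + a + b + c) ^ k - (1 + a) ^ k - (1 + c) ^ k + 1 := by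
  have hle := one_add_pow_add_one_add_pow_le k ha hc
  have hlt : (1 + a + c) ^ k < (1 + a + b + c) ^ k :=
    pow_lt_pow_left₀ (by linarith) (by linarith) hk
  linarith

lemma mul_one_add_pow_sub_mul_one_add_pow_le (n : ℕ) {a b : ℝ} (hb : 0 ≤ b) (hba : b ≤ a) :
    a * (1 + a) ^ n - b * (1 + b) ^ n ≤ (a - b) * (1 + a + b) ^ n := by
  induction n with
  | zero => simp
  | succ n ih =>
    have hpow : (1 + a) ^ n ≤ (1 + a + b) ^ n := pow_le_pow_left₀ (by linarith) (by linarith) n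
    calc a * (1 + a) ^ (n + 1) - b * (1 + b) ^ (n + 1)
        = (1 + b) * (a * (1 + a) ^ n - b * (1 + b) ^ n) + (a - b) * (a * (1 + a) ^ n) := by ring
      _ ≤ (1 + b) * ((a - b) * (1 + a + b) ^ n) + (a - b) * (a * (1 + a + b) ^ n) := by
          gcongr
          linarith
      _ = (a - b) * (1 + a + b) ^ (n + 1) := by ring

lemma mul_pow_sub_one_add_pow_lt {n : ℕ} (hn : n ≠ 0) {a b S : ℝ} (hb : 0 ≤ b) (hba : b < a)
    (hS : 1 + a + b < S) :
    b * (S ^ n - (1 + b) ^ n) < a * (S ^ n - (1 + a) ^ n) := by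
  have hle := mul_one_add_pow_sub_mul_one_add_pow_le n hb hba.le
  have hlt : (a - b) * (1 + a + b) ^ n < (a - b) * S ^ n :=
    mul_lt_mul_of_pos_left (pow_lt_pow_left₀ hS (by linarith) hn) (by linarith)
  linarith

lemma eq_of_mul_pow_sub_one_add_pow_eq {n : ℕ} (hn : n ≠ 0) {a b S : ℝ} (ha : 0 ≤ a)
    (hb : 0 ≤ b) (hS : 1 + a + b < S)
    (h : a * (S ^ n - (1 + a) ^ n) = b * (S ^ n - (1 + b) ^ n)) : a = b := by
  rcases lt_trichotomy a b with hab | hab | hab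
  · exact absurd h (mul_pow_sub_one_add_pow_lt hn ha hab (by linarith)).ne
  · exact hab
  · exact absurd h (mul_pow_sub_one_add_pow_lt hn hb hab hS).ne'

lemma hasDerivAt_add_pow_sub_one_add_pow (k : ℕ) (c d t : ℝ) :
    HasDerivAt (fun x => (c + x) ^ k - (1 + x) ^ k + d)
      (k * ((c + t) ^ (k - 1) - (1 + t) ^ (k - 1))) t :=
  ((((hasDerivAt_id' t).const_add c).fun_pow k).fun_sub
    (((hasDerivAt_id' t).const_add 1).fun_pow k)).add_const d |>.congr_deriv (by ring)

theorem stmt_12_general (k : ℕ) (hk : 3 ≤ k)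
    (f : ℝ → ℝ → ℝ → ℝ)
    (hf : ∀ x₁ x₂ x₃ : ℝ, f x₁ x₂ x₃
      = (1 + x₁ + x₂ + x₃) ^ k - (1 + x₁) ^ k - (1 + x₃) ^ k + 1)
    (t₁ t₂ t₃ c : ℝ) (h₁ : 0 < t₁) (h₂ : 0 < t₂) (h₃ : 0 < t₃)
    (e₁ : t₁ * deriv (fun x => f x t₂ t₃) t₁ / f t₁ t₂ t₃ = c)
    (e₃ : t₃ * deriv (fun x => f t₁ t₂ x) t₃ / f t₁ t₂ t₃ = c) :
    t₁ = t₃ := by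
  set S := 1 + t₁ + t₂ + t₃
  have hF : f t₁ t₂ t₃ ≠ 0 := by
    rw [hf]
    exact (add_pow_sub_one_add_pow_sub_one_add_pow_add_one_pos (by omega) h₁.le h₂ h₃.le).ne'
  have d₁ : deriv (fun x => f x t₂ t₃) t₁ = k * (S ^ (k - 1) - (1 + t₁) ^ (k - 1)) := by
    have h := hasDerivAt_add_pow_sub_one_add_pow k (1 + t₂ + t₃) (1 - (1 + t₃) ^ k) t₁
    rw [show (fun x => f x t₂ t₃) = fun x => (1 + t₂ + t₃ + x) ^ k - (1 + x) ^ k +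
      (1 - (1 + t₃) ^ k) from funext fun x => by rw [hf]; ring, h.deriv,
      show 1 + t₂ + t₃ + t₁ = S by ring]
  have d₃ : deriv (fun x => f t₁ t₂ x) t₃ = k * (S ^ (k - 1) - (1 + t₃) ^ (k - 1)) := by
    have h := hasDerivAt_add_pow_sub_one_add_pow k (1 + t₁ + t₂) (1 - (1 + t₁) ^ k) t₃
    rw [show (fun x => f t₁ t₂ x) = fun x => (1 + t₁ + t₂ + x) ^ k - (1 + x) ^ k +
      (1 - (1 + t₁) ^ k) from funext fun x => by rw [hf]; ring, h.deriv]
  rw [d₁] at e₁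
  rw [d₃] at e₃
  have hk₀ : (k : ℝ) ≠ 0 := by positivity
  have heq :
      t₁ * (S ^ (k - 1) - (1 + t₁) ^ (k - 1)) = t₃ * (S ^ (k - 1) - (1 + t₃) ^ (k - 1)) := by
    have h := (div_left_inj' hF).1 (e₁.trans e₃.symm)
    apply mul_left_cancel₀ hk₀
    linear_combination h
  exact eq_of_mul_pow_sub_one_add_pow_eq (by omega) h₁.le h₃.le (by linarith) heq

/-- For any positive solution (t₁,t₂,t₃) of the saddle point system
tᵢ ∂ln f/∂tᵢ = cᵢ with c₁ = c₃, where
f(x₁,x₂,x₃) = (1+x₁+x₂+x₃)^k - (1+x₁)^k - (1+x₃)^k + 1, one has t₁ = t₃. -/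
theorem stmt_12 (k : ℕ) (hk : 3 ≤ k)
    (f : ℝ → ℝ → ℝ → ℝ)
    (hf : ∀ x₁ x₂ x₃ : ℝ, f x₁ x₂ x₃
      = (1 + x₁ + x₂ + x₃) ^ k - (1 + x₁) ^ k - (1 + x₃) ^ k + 1)
    (t₁ t₂ t₃ c c₂ : ℝ) (h₁ : 0 < t₁) (h₂ : 0 < t₂) (h₃ : 0 < t₃)
    (e₁ : t₁ * deriv (fun x => f x t₂ t₃) t₁ / f t₁ t₂ t₃ = c)
    (e₂ : t₂ * deriv (fun x => f t₁ x t₃) t₂ / f t₁ t₂ t₃ = c₂)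
    (e₃ : t₃ * deriv (fun x => f t₁ t₂ x) t₃ / f t₁ t₂ t₃ = c) :
    t₁ = t₃ :=
  stmt_12_general k hk f hf t₁ t₂ t₃ c h₁ h₂ h₃ e₁ e₃
end

section
/- For the strictly regular model with literal degree r and n variables (so α = 2r/k), the total number of configuration formulas is (kαn)! = (2rn)!, and the number of configuration formulas satisfied by both the all-zero assignment and an assignment agreeing with it on exactly i variables equals 2ⁿ-free count ((r(n−i))!)²((ri)!)² · coef(f(x₁,x₂,x₃)^{αn}, x₁^{r(n−i)} x₂^{ri} x₃^{r(n−i)}). -/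
/-!
Label the literal slots by their edge type (`τ`). A configuration `σ` induces the labelling
`τ ∘ σ⁻¹` of the clause slots, and whether both assignments satisfy the formula depends only on
this labelling. The labellings that arise are exactly those with the same type counts as `τ`, each
from a coset of the stabiliser of `τ`, i.e. from `(r(n-i))!² (ri)!²` configurations. On the other
side, `f` is the generating polynomial of the clause words satisfied by both assignments, so the
coefficient of `f ^ m` counts the admissible labellings with the prescribed type counts.
-/

open Equiv Finset MvPolynomial
open scoped Nat

theorem card_filter_perm_comp_eq {α ι : Type*} [Fintype α] [DecidableEq α] [Fintype ι]
    [DecidableEq ι] (f g : α → ι) (h : ∀ c, #{x | f x = c} = #{x | g x = c}) :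
    #{σ : Perm α | f ∘ σ = g} = ∏ c, (#{x | g x = c})! := by
  have e : ∀ c, {x // g x = c} ≃ {x // f x = c} := fun c =>
    Fintype.equivOfCardEq (by simp only [Fintype.card_subtype, h])
  set σ₀ : Perm α := ofFiberEquiv e
  have hf : f = g ∘ ⇑σ₀⁻¹ := by
    ext x
    rw [Function.comp_apply, ← ofFiberEquiv_map e (σ₀⁻¹ x)]
    exact congrArg f (σ₀.apply_symm_apply x).symm
  simp only [← Fintype.card_subtype, ← DomMulAct.stabilizer_card g]
  refine Fintype.card_congr ((Equiv.mulLeft σ₀⁻¹).subtypeEquiv fun σ => ?_)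
  simp [hf, Function.comp_assoc]

theorem card_filter_comp_perm {α ι : Type*} [Fintype α] [DecidableEq ι]
    (τ : α → ι) (σ : Perm α) (c : ι) : #{x | τ (σ x) = c} = #{x | τ x = c} :=
  card_equiv σ (by simp)

theorem card_filter_perm_comp_inv {α ι : Type*} [Fintype α] [DecidableEq α] [Fintype ι]
    [DecidableEq ι] (τ : α → ι) (P : (α → ι) → Prop) [DecidablePred P] :
    #{σ : Perm α | P (τ ∘ ⇑σ⁻¹)} =
      #{L : α → ι | P L ∧ ∀ c, #{x | L x = c} = #{x | τ x = c}} * ∏ c, (#{x | τ x = c})! := by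
  rw [card_eq_sum_card_fiberwise (f := fun σ : Perm α => τ ∘ ⇑σ⁻¹), sum_const_nat]
  · rintro L hL
    simp only [mem_filter, mem_univ, true_and] at hL
    rw [← card_filter_perm_comp_eq L τ hL.2]
    congr 1
    ext σ
    simp only [mem_filter, mem_univ, true_and]
    rw [and_iff_right_of_imp fun h => h ▸ hL.1]
    exact (comp_symm_eq σ L τ).trans eq_comm
  · intro σ _
    simp_all [card_filter_comp_perm]

theorem forall_card_filter_eq_iff_castSucc {α : Type*} [Fintype α] {n : ℕ}
    (L τ : α → Fin (n + 1)) :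
    (∀ c, #{x | L x = c} = #{x | τ x = c}) ↔
      ∀ c : Fin n, #{x | L x = c.castSucc} = #{x | τ x = c.castSucc} := by
  rw [Fin.forall_fin_succ', and_iff_left_of_imp]
  intro h
  have total : ∀ f : α → Fin (n + 1), ∑ c, #{x | f x = c} = Fintype.card α := fun f =>
    (card_eq_sum_card_fiberwise fun x _ => mem_univ (f x)).symm
  have := (total L).trans (total τ).symm
  rw [Fin.sum_univ_castSucc, Fin.sum_univ_castSucc, sum_congr rfl fun c _ => h c] at this
  omega

/-- Letters `0, 1, 2, 3 : Fin 4` stand for the edge types 1, 2, 3, 4. -/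
def SatisfiedByBoth {κ : Type*} (w : κ → Fin 4) : Prop :=
  (∃ i, w i = 1) ∨ ((∃ i, w i = 0) ∧ ∃ i, w i = 2)

instance {κ : Type*} [Fintype κ] : DecidablePred (SatisfiedByBoth (κ := κ)) :=
  fun _ => inferInstanceAs (Decidable (_ ∨ _))

theorem satisfiedByBoth_iff {κ : Type*} (w : κ → Fin 4) :
    SatisfiedByBoth w ↔ ¬ (∀ i, w i ∈ ({0, 3} : Finset (Fin 4))) ∧
      ¬ (∀ i, w i ∈ ({2, 3} : Finset (Fin 4))) := by
  simp only [SatisfiedByBoth, mem_insert, mem_singleton, not_forall, not_or]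
  constructor
  · grind
  · rintro ⟨⟨i, hi⟩, j, hj⟩
    have : w i = 1 ∨ w i = 2 := by omega
    have : w j = 0 ∨ w j = 1 := by omega
    grind

noncomputable def typeExp : Fin 4 → Fin 3 →₀ ℕ :=
  ![Finsupp.single 0 1, Finsupp.single 1 1, Finsupp.single 2 1, 0]

theorem typeExp_apply (x : Fin 4) (c : Fin 3) :
    typeExp x c = if x = c.castSucc then 1 else 0 := by
  fin_cases x <;> fin_cases c <;> simp [typeExp]

theorem sum_typeExp_apply {α : Type*} [Fintype α] (L : α → Fin 4) (c : Fin 3) :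
    (∑ s, typeExp (L s)) c = #{s | L s = c.castSucc} := by
  simp only [Finsupp.finsetSum_apply, typeExp_apply, sum_boole, Nat.cast_id]

theorem sum_typeExp_eq_iff {α : Type*} [Fintype α] (L τ : α → Fin 4) :
    ∑ s, typeExp (L s) = ∑ s, typeExp (τ s) ↔ ∀ c, #{x | L x = c} = #{x | τ x = c} := by
  rw [forall_card_filter_eq_iff_castSucc, Finsupp.ext_iff]
  simp only [sum_typeExp_apply]

noncomputable def clausePoly (R : Type*) [CommRing R] (k : ℕ) : MvPolynomial (Fin 3) R :=
  (1 + X 0 + X 1 + X 2) ^ k - (1 + X 0) ^ k - (1 + X 2) ^ k + 1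

theorem sum_monomial_typeExp_pow {R : Type*} [CommRing R] (k : ℕ) (s : Finset (Fin 4)) :
    (∑ c ∈ s, monomial (typeExp c) (1 : R)) ^ k =
      ∑ w : Fin k → Fin 4 with ∀ i, w i ∈ s, monomial (∑ i, typeExp (w i)) 1 := by
  rw [sum_pow']
  refine sum_congr (by ext; simp [Fintype.mem_piFinset]) fun w _ => ?_
  rw [monomial_sum_one]

/-- Inclusion–exclusion: a word fails iff it lies in `{0, 3}ᵏ ∪ {2, 3}ᵏ`. -/
theorem clausePoly_eq_sum (R : Type*) [CommRing R] (k : ℕ) :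
    clausePoly R k =
      ∑ w : Fin k → Fin 4 with SatisfiedByBoth w, monomial (∑ i, typeExp (w i)) 1 := by
  have h0123 : (1 + X 0 + X 1 + X 2 : MvPolynomial (Fin 3) R) =
      ∑ c ∈ univ, monomial (typeExp c) 1 := by
    simp only [X, typeExp, Fin.sum_univ_four, Matrix.cons_val, monomial_zero', C_1]
    ring
  have h03 : (1 + X 0 : MvPolynomial (Fin 3) R) = ∑ c ∈ {0, 3}, monomial (typeExp c) 1 := by
    rw [sum_pair (by decide), add_comm]
    simp only [X, typeExp, Matrix.cons_val, monomial_zero', C_1]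
  have h23 : (1 + X 2 : MvPolynomial (Fin 3) R) = ∑ c ∈ {2, 3}, monomial (typeExp c) 1 := by
    rw [sum_pair (by decide), add_comm]
    simp only [X, typeExp, Matrix.cons_val, monomial_zero', C_1]
  have h3 : (∑ c ∈ {0, 3} ∩ {2, 3}, monomial (typeExp c) (1 : R)) ^ k = 1 := by
    simp [typeExp]
  rw [clausePoly, h0123, h03, h23, ← h3]
  simp only [sum_monomial_typeExp_pow, sum_filter, ← sum_sub_distrib, ← sum_add_distrib]
  refine sum_congr rfl fun w _ => ?_
  simp only [satisfiedByBoth_iff, mem_inter, forall_and, mem_univ, implies_true]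
  split_ifs <;> simp_all

/-- Slot `i` of clause `j` is clause slot `k * j + i`, so the clause of slot `s` is `s / k`. -/
def clauseSlotEquiv (k m : ℕ) : Fin m × Fin k ≃ Fin (k * m) :=
  finProdFinEquiv.trans (finCongr (Nat.mul_comm m k))

theorem exists_clauseSlot_iff {α : Type*} {k m : ℕ} (σ : α ≃ Fin (k * m)) (p : α → Prop)
    (j : Fin m) :
    (∃ t, p t ∧ (σ t : ℕ) / k = j) ↔ ∃ i, p (σ.symm (clauseSlotEquiv k m (j, i))) := by
  have hdiv : ∀ (a : Fin m) (b : Fin k), ((clauseSlotEquiv k m (a, b) : ℕ)) / k = a :=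
    fun a b => by
      simp [clauseSlotEquiv, Nat.add_mul_div_left _ _ b.pos, Nat.div_eq_of_lt b.isLt]
  rw [← (σ.trans (clauseSlotEquiv k m).symm).symm.exists_congr_right]
  simp only [Prod.exists, symm_trans_apply, symm_symm, apply_symm_apply, hdiv, Fin.val_inj,
    exists_and_right, exists_eq_right]

def ClausesSatisfiedByBoth {k m : ℕ} (L : Fin (k * m) → Fin 4) : Prop :=
  ∀ j : Fin m, SatisfiedByBoth fun i : Fin k => L (clauseSlotEquiv k m (j, i))

instance {k m : ℕ} : DecidablePred (ClausesSatisfiedByBoth (k := k) (m := m)) :=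
  fun _ => inferInstanceAs (Decidable (∀ _, _))

theorem clausePoly_pow_eq_sum (R : Type*) [CommRing R] (k m : ℕ) :
    clausePoly R k ^ m = ∑ L : Fin (k * m) → Fin 4 with ClausesSatisfiedByBoth L,
      monomial (∑ s, typeExp (L s)) 1 := by
  rw [clausePoly_eq_sum, ← Fin.prod_const, prod_univ_sum]
  symm
  refine sum_equiv ((arrowCongr (clauseSlotEquiv k m).symm (Equiv.refl _)).trans
    (Equiv.curry _ _ _)) (fun L => ?_) (fun L _ => ?_)
  · simp only [mem_filter, mem_univ, true_and, Fintype.mem_piFinset]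
    rfl
  · rw [← monomial_sum_one, ← Fintype.sum_prod_type', ← (clauseSlotEquiv k m).sum_comp]
    rfl

theorem coeff_clausePoly_pow (R : Type*) [CommRing R] (k m : ℕ) (t : Fin 3 →₀ ℕ) :
    (clausePoly R k ^ m).coeff t =
      #{L : Fin (k * m) → Fin 4 | ClausesSatisfiedByBoth L ∧ ∑ s, typeExp (L s) = t} := by
  rw [clausePoly_pow_eq_sum, coeff_sum]
  simp [coeff_monomial, sum_boole, filter_filter]

def literalType (a b x : ℕ) : Fin 4 :=
  if x < a then 0 else if x < a + b then 1 else if x < 2 * a + b then 2 else 3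

theorem literalType_eq_zero_iff {a b x : ℕ} : literalType a b x = 0 ↔ x < a := by
  grind [literalType]

theorem literalType_eq_one_iff {a b x : ℕ} : literalType a b x = 1 ↔ a ≤ x ∧ x < a + b := by
  grind [literalType]

theorem literalType_eq_two_iff {a b x : ℕ} :
    literalType a b x = 2 ↔ a + b ≤ x ∧ x < 2 * a + b := by
  grind [literalType]

theorem card_filter_fin_mem_Ico {N lo hi : ℕ} (h : hi ≤ N) :
    #{t : Fin N | lo ≤ (t : ℕ) ∧ (t : ℕ) < hi} = hi - lo := by
  rw [← card_map Fin.valEmbedding, ← Nat.card_Ico]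
  congr 1
  ext x
  simp only [mem_map, mem_filter, mem_univ, true_and, Fin.valEmbedding_apply, mem_Ico]
  exact ⟨by rintro ⟨t, ht, rfl⟩; exact ht, fun hx => ⟨⟨x, by omega⟩, hx, rfl⟩⟩

theorem card_literalType_eq {a b N : ℕ} (hN : N = 2 * a + 2 * b) (c : Fin 4) :
    #{t : Fin N | literalType a b t = c} = ![a, b, a, b] c := by
  have hfiber : ∀ x : ℕ, x < N → (literalType a b x = c ↔
      ![0, a, a + b, 2 * a + b] c ≤ x ∧ x < ![a, a + b, 2 * a + b, N] c) := by
    intro x hx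
    fin_cases c <;>
      simp only [Fin.zero_eta, Fin.mk_one, Fin.reduceFinMk, Matrix.cons_val] <;>
      grind [literalType]
  rw [filter_congr fun (t : Fin N) _ => hfiber t t.isLt, card_filter_fin_mem_Ico] <;>
    fin_cases c <;>
    simp only [Fin.zero_eta, Fin.mk_one, Fin.reduceFinMk, Matrix.cons_val] <;>
    omega

theorem stmt_17_general (k r n m i : ℕ) (hi : i ≤ n)
    (hm : k * m = 2 * r * n) :
    let f : MvPolynomial (Fin 3) ℤ :=
      (1 + X 0 + X 1 + X 2) ^ k - (1 + X 0) ^ k - (1 + X 2) ^ k + 1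
    let type1 : ℕ → Prop := fun t => t < r * (n - i)
    let type2 : ℕ → Prop := fun t => r * (n - i) ≤ t ∧ t < r * (n - i) + r * i
    let type3 : ℕ → Prop := fun t =>
      r * (n - i) + r * i ≤ t ∧ t < 2 * (r * (n - i)) + r * i
    Fintype.card (Equiv.Perm (Fin (k * m))) = (2 * r * n).factorial ∧
    ((Finset.univ.filter (fun σ : Equiv.Perm (Fin (k * m)) =>
        ∀ j : Fin m,
          (∃ t : Fin (k * m), type2 (t : ℕ) ∧ (σ t : ℕ) / k = (j : ℕ)) ∨
          ((∃ t : Fin (k * m), type1 (t : ℕ) ∧ (σ t : ℕ) / k = (j : ℕ)) ∧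
           (∃ t : Fin (k * m), type3 (t : ℕ) ∧ (σ t : ℕ) / k = (j : ℕ))))).card : ℤ)
      = ((r * (n - i)).factorial : ℤ) ^ 2 * ((r * i).factorial : ℤ) ^ 2
        * (f ^ m).coeff (Finsupp.single 0 (r * (n - i))
            + Finsupp.single 1 (r * i) + Finsupp.single 2 (r * (n - i))) := by
  intro f type1 type2 type3
  have hN : k * m = 2 * (r * (n - i)) + 2 * (r * i) := by
    rw [hm, ← mul_add, ← mul_add, Nat.sub_add_cancel hi, mul_assoc]
  refine ⟨by simp [Fintype.card_perm, hm], ?_⟩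
  let τ : Fin (k * m) → Fin 4 := fun t => literalType (r * (n - i)) (r * i) t
  have hsat : ∀ σ : Perm (Fin (k * m)), ClausesSatisfiedByBoth (τ ∘ ⇑σ⁻¹) ↔ ∀ j : Fin m,
      (∃ t : Fin (k * m), type2 (t : ℕ) ∧ (σ t : ℕ) / k = (j : ℕ)) ∨
      ((∃ t : Fin (k * m), type1 (t : ℕ) ∧ (σ t : ℕ) / k = (j : ℕ)) ∧
        (∃ t : Fin (k * m), type3 (t : ℕ) ∧ (σ t : ℕ) / k = (j : ℕ))) := fun σ => by
    simp only [exists_clauseSlot_iff σ, ClausesSatisfiedByBoth, SatisfiedByBoth, τ,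
      Function.comp_apply, literalType_eq_zero_iff, literalType_eq_one_iff,
      literalType_eq_two_iff]
    rfl
  have hτ : ∀ c, #{x | τ x = c} = ![r * (n - i), r * i, r * (n - i), r * i] c :=
    card_literalType_eq hN
  have htarget : Finsupp.single 0 (r * (n - i)) + Finsupp.single 1 (r * i) +
      Finsupp.single 2 (r * (n - i)) = ∑ s, typeExp (τ s) := by
    ext c
    rw [sum_typeExp_apply, hτ]
    fin_cases c <;> simp
  rw [filter_congr fun σ _ => (hsat σ).symm, card_filter_perm_comp_inv]
  simp only [← sum_typeExp_eq_iff]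
  rw [htarget, show f = clausePoly ℤ k from rfl, coeff_clausePoly_pow, Fin.prod_univ_four]
  simp only [hτ]
  push_cast
  ring

/-- Strictly regular model with literal degree r, n variables, m = 2rn/k clauses
(so α = 2r/k).  The total number of configuration formulas is (2rn)!, and the
number of configuration formulas satisfied by both the all-zero assignment and
an assignment Y agreeing with it on exactly i variables equals
((r(n−i))!)²((ri)!)² · coef(f^{m}, x₁^{r(n−i)} x₂^{ri} x₃^{r(n−i)}), where
f = (1+X₁+X₂+X₃)^k − (1+X₁)^k − (1+X₃)^k + 1.  The literal slots Fin (k·m) are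
ordered: type-1 slots first (r(n−i) of them), then type-2 (ri), then type-3
(r(n−i)), then type-4 (ri); the clause of clause-slot s is s/k; a clause is
satisfied by both assignments iff it meets a type-2 slot, or both a type-1 and
a type-3 slot. -/
theorem stmt_17 (k r n m i : ℕ) (hk : 3 ≤ k) (hr : 1 ≤ r) (hi : i ≤ n)
    (hm : k * m = 2 * r * n) :
    let f : MvPolynomial (Fin 3) ℤ :=
      (1 + X 0 + X 1 + X 2) ^ k - (1 + X 0) ^ k - (1 + X 2) ^ k + 1
    let type1 : ℕ → Prop := fun t => t < r * (n - i)
    let type2 : ℕ → Prop := fun t => r * (n - i) ≤ t ∧ t < r * (n - i) + r * i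
    let type3 : ℕ → Prop := fun t =>
      r * (n - i) + r * i ≤ t ∧ t < 2 * (r * (n - i)) + r * i
    Fintype.card (Equiv.Perm (Fin (k * m))) = (2 * r * n).factorial ∧
    ((Finset.univ.filter (fun σ : Equiv.Perm (Fin (k * m)) =>
        ∀ j : Fin m,
          (∃ t : Fin (k * m), type2 (t : ℕ) ∧ (σ t : ℕ) / k = (j : ℕ)) ∨
          ((∃ t : Fin (k * m), type1 (t : ℕ) ∧ (σ t : ℕ) / k = (j : ℕ)) ∧
           (∃ t : Fin (k * m), type3 (t : ℕ) ∧ (σ t : ℕ) / k = (j : ℕ))))).card : ℤ)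
      = ((r * (n - i)).factorial : ℤ) ^ 2 * ((r * i).factorial : ℤ) ^ 2
        * (f ^ m).coeff (Finsupp.single 0 (r * (n - i))
            + Finsupp.single 1 (r * i) + Finsupp.single 2 (r * (n - i))) :=
  stmt_17_general k r n m i hi hm
end

section
/- For all γ ∈ (0,1) and integers k ≥ 3, r ≥ 1 with α = 2r/k, the function s(γ) = (1 − kα)(ln 2 + h(γ)) + α ln f(t₁,t₂,t₃) − r(1−γ)(ln t₁ + ln t₃) − rγ ln t₂ (where (t₁,t₂,t₃) solves the saddle point equations a_f(t) = (k(1−γ)/2, kγ/2, k(1−γ)/2)) has a critical point at γ = 1/2, i.e., ds/dγ|_{γ=1/2} = 0. -/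
/-!
The saddle point equations `tᵢ ∂ᵢf / f = aᵢ` say exactly that `s` is stationary in `t`, so only
the explicit dependence on `γ` contributes to `ds/dγ`:
`ds/dγ = (1 - kα) (ln (1 - γ) - ln γ) + r ln t₁ - r ln t₂ + r ln t₃`.
At `γ = 1/2` the entropy term vanishes and so does the rest, since `t₂ = x_k² = t₁ t₃`.
-/

open Real Set

noncomputable def saddlePoly (k : ℕ) (x₁ x₂ x₃ : ℝ) : ℝ :=
  (1 + x₁ + x₂ + x₃) ^ k - (1 + x₁) ^ k - (1 + x₃) ^ k + 1

section saddlePoly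

variable (k : ℕ)

lemma hasDerivAt_saddlePoly_fst (a b c : ℝ) :
    HasDerivAt (fun x => saddlePoly k x b c)
      (k * (1 + a + b + c) ^ (k - 1) - k * (1 + a) ^ (k - 1)) a := by
  have h := (((((hasDerivAt_id a).const_add 1).add_const b).add_const c).pow k).sub
    (((hasDerivAt_id a).const_add 1).pow k)
  simpa [saddlePoly] using (h.sub_const ((1 + c) ^ k)).add_const 1

lemma hasDerivAt_saddlePoly_snd (a b c : ℝ) :
    HasDerivAt (fun x => saddlePoly k a x c) (k * (1 + a + b + c) ^ (k - 1)) b := by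
  have h := (((hasDerivAt_id b).const_add (1 + a)).add_const c).pow k
  simpa [saddlePoly, add_assoc] using ((h.sub_const ((1 + a) ^ k)).sub_const ((1 + c) ^ k)).add_const 1

lemma hasDerivAt_saddlePoly_thd (a b c : ℝ) :
    HasDerivAt (fun x => saddlePoly k a b x)
      (k * (1 + a + b + c) ^ (k - 1) - k * (1 + c) ^ (k - 1)) c := by
  have h := ((hasDerivAt_id c).const_add (1 + a + b)).pow k
  simpa [saddlePoly, sub_sub, add_assoc] using
    ((h.sub_const ((1 + a) ^ k)).sub (((hasDerivAt_id c).const_add 1).pow k)).add_const 1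

variable {t₁ t₂ t₃ : ℝ → ℝ} {d₁ d₂ d₃ γ : ℝ}

lemma hasDerivAt_saddlePoly_comp (h₁ : HasDerivAt t₁ d₁ γ) (h₂ : HasDerivAt t₂ d₂ γ)
    (h₃ : HasDerivAt t₃ d₃ γ) :
    HasDerivAt (fun γ => saddlePoly k (t₁ γ) (t₂ γ) (t₃ γ))
      (deriv (fun x => saddlePoly k x (t₂ γ) (t₃ γ)) (t₁ γ) * d₁
        + deriv (fun x => saddlePoly k (t₁ γ) x (t₃ γ)) (t₂ γ) * d₂
        + deriv (fun x => saddlePoly k (t₁ γ) (t₂ γ) x) (t₃ γ) * d₃) γ := by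
  rw [(hasDerivAt_saddlePoly_fst ..).deriv, (hasDerivAt_saddlePoly_snd ..).deriv,
    (hasDerivAt_saddlePoly_thd ..).deriv]
  exact (((((((h₁.const_add 1).fun_add h₂).fun_add h₃).fun_pow k).fun_sub
    ((h₁.const_add 1).fun_pow k)).fun_sub ((h₃.const_add 1).fun_pow k)).add_const 1).congr_deriv
    (by ring)

lemma hasDerivAt_log_saddlePoly_of_saddle {a₁ a₂ a₃ : ℝ} (h₁ : HasDerivAt t₁ d₁ γ)
    (h₂ : HasDerivAt t₂ d₂ γ) (h₃ : HasDerivAt t₃ d₃ γ)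
    (ht₁ : t₁ γ ≠ 0) (ht₂ : t₂ γ ≠ 0) (ht₃ : t₃ γ ≠ 0)
    (hf : saddlePoly k (t₁ γ) (t₂ γ) (t₃ γ) ≠ 0)
    (hs₁ : t₁ γ * deriv (fun x => saddlePoly k x (t₂ γ) (t₃ γ)) (t₁ γ)
      / saddlePoly k (t₁ γ) (t₂ γ) (t₃ γ) = a₁)
    (hs₂ : t₂ γ * deriv (fun x => saddlePoly k (t₁ γ) x (t₃ γ)) (t₂ γ)
      / saddlePoly k (t₁ γ) (t₂ γ) (t₃ γ) = a₂)
    (hs₃ : t₃ γ * deriv (fun x => saddlePoly k (t₁ γ) (t₂ γ) x) (t₃ γ)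
      / saddlePoly k (t₁ γ) (t₂ γ) (t₃ γ) = a₃) :
    HasDerivAt (fun γ => log (saddlePoly k (t₁ γ) (t₂ γ) (t₃ γ)))
      (a₁ * d₁ / t₁ γ + a₂ * d₂ / t₂ γ + a₃ * d₃ / t₃ γ) γ := by
  convert (hasDerivAt_saddlePoly_comp k h₁ h₂ h₃).log hf using 1
  rw [← hs₁, ← hs₂, ← hs₃]
  field_simp

end saddlePoly

noncomputable def saddleExponent (k r : ℕ) (α : ℝ) (t₁ t₂ t₃ : ℝ → ℝ) (γ : ℝ) : ℝ :=
  (1 - k * α) * (log 2 + binEntropy γ) + α * log (saddlePoly k (t₁ γ) (t₂ γ) (t₃ γ))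
    - r * (1 - γ) * (log (t₁ γ) + log (t₃ γ)) - r * γ * log (t₂ γ)

theorem hasDerivAt_saddleExponent {k r : ℕ} {α γ : ℝ} {t₁ t₂ t₃ : ℝ → ℝ} (hα : α * k = 2 * r)
    (hγ : γ ∈ Ioo 0 1) (h₁ : DifferentiableAt ℝ t₁ γ) (h₂ : DifferentiableAt ℝ t₂ γ)
    (h₃ : DifferentiableAt ℝ t₃ γ) (ht₁ : t₁ γ ≠ 0) (ht₂ : t₂ γ ≠ 0) (ht₃ : t₃ γ ≠ 0)
    (hf : saddlePoly k (t₁ γ) (t₂ γ) (t₃ γ) ≠ 0)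
    (hs₁ : t₁ γ * deriv (fun x => saddlePoly k x (t₂ γ) (t₃ γ)) (t₁ γ)
      / saddlePoly k (t₁ γ) (t₂ γ) (t₃ γ) = k * (1 - γ) / 2)
    (hs₂ : t₂ γ * deriv (fun x => saddlePoly k (t₁ γ) x (t₃ γ)) (t₂ γ)
      / saddlePoly k (t₁ γ) (t₂ γ) (t₃ γ) = k * γ / 2)
    (hs₃ : t₃ γ * deriv (fun x => saddlePoly k (t₁ γ) (t₂ γ) x) (t₃ γ)
      / saddlePoly k (t₁ γ) (t₂ γ) (t₃ γ) = k * (1 - γ) / 2) :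
    HasDerivAt (saddleExponent k r α t₁ t₂ t₃)
      ((1 - k * α) * (log (1 - γ) - log γ)
        + r * log (t₁ γ) - r * log (t₂ γ) + r * log (t₃ γ)) γ := by
  have hentropy := ((hasDerivAt_binEntropy hγ.1.ne' hγ.2.ne).const_add (log 2)).const_mul
    (1 - k * α)
  have hlogf := (hasDerivAt_log_saddlePoly_of_saddle k h₁.hasDerivAt h₂.hasDerivAt h₃.hasDerivAt
    ht₁ ht₂ ht₃ hf hs₁ hs₂ hs₃).const_mul α
  have hlog₁ := h₁.hasDerivAt.log ht₁
  have hlog₂ := h₂.hasDerivAt.log ht₂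
  have hlog₃ := h₃.hasDerivAt.log ht₃
  have hweight : HasDerivAt (fun γ : ℝ => r * (1 - γ)) (r * -1) γ :=
    ((hasDerivAt_id γ).const_sub 1).const_mul _
  refine (((hentropy.fun_add hlogf).fun_sub (hweight.fun_mul (hlog₁.fun_add hlog₃))).fun_sub
    (((hasDerivAt_id' γ).const_mul (r : ℝ)).fun_mul hlog₂)).congr_deriv ?_
  linear_combination ((1 - γ) * (deriv t₁ γ / t₁ γ) + γ * (deriv t₂ γ / t₂ γ)
    + (1 - γ) * (deriv t₃ γ / t₃ γ)) / 2 * hα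

theorem stmt_18_general (k r : ℕ) (hk : 3 ≤ k) (α : ℝ) (hα : α = 2 * r / k)
    (f : ℝ → ℝ → ℝ → ℝ)
    (hf : ∀ x₁ x₂ x₃ : ℝ, f x₁ x₂ x₃
      = (1 + x₁ + x₂ + x₃) ^ k - (1 + x₁) ^ k - (1 + x₃) ^ k + 1)
    (t₁ t₂ t₃ : ℝ → ℝ)
    (hpos : ∀ γ ∈ Set.Ioo (0:ℝ) 1, 0 < t₁ γ ∧ 0 < t₂ γ ∧ 0 < t₃ γ)
    (hdiff : ∀ γ ∈ Set.Ioo (0:ℝ) 1,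
      DifferentiableAt ℝ t₁ γ ∧ DifferentiableAt ℝ t₂ γ ∧ DifferentiableAt ℝ t₃ γ)
    (hfpos : ∀ γ ∈ Set.Ioo (0:ℝ) 1, 0 < f (t₁ γ) (t₂ γ) (t₃ γ))
    (hsaddle : ∀ γ ∈ Set.Ioo (0:ℝ) 1,
      t₁ γ * deriv (fun x => f x (t₂ γ) (t₃ γ)) (t₁ γ) / f (t₁ γ) (t₂ γ) (t₃ γ)
          = (k : ℝ) * (1 - γ) / 2 ∧
      t₂ γ * deriv (fun x => f (t₁ γ) x (t₃ γ)) (t₂ γ) / f (t₁ γ) (t₂ γ) (t₃ γ)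
          = (k : ℝ) * γ / 2 ∧
      t₃ γ * deriv (fun x => f (t₁ γ) (t₂ γ) x) (t₃ γ) / f (t₁ γ) (t₂ γ) (t₃ γ)
          = (k : ℝ) * (1 - γ) / 2)
    (xk : ℝ)
    (thalf : t₁ (1/2) = xk ∧ t₂ (1/2) = xk ^ 2 ∧ t₃ (1/2) = xk)
    (s : ℝ → ℝ)
    (hs : ∀ γ : ℝ, s γ
      = (1 - k * α) * (Real.log 2 + (-γ * Real.log γ - (1 - γ) * Real.log (1 - γ)))
        + α * Real.log (f (t₁ γ) (t₂ γ) (t₃ γ))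
        - r * (1 - γ) * (Real.log (t₁ γ) + Real.log (t₃ γ))
        - r * γ * Real.log (t₂ γ)) :
    deriv s (1/2) = 0 := by
  have hhalf : (1 / 2 : ℝ) ∈ Ioo 0 1 := by norm_num
  obtain rfl : f = saddlePoly k := funext fun _ => funext fun _ => funext fun _ => hf _ _ _
  obtain rfl : s = saddleExponent k r α t₁ t₂ t₃ := funext fun γ => by
    rw [hs, saddleExponent, binEntropy_eq_negMulLog_add_negMulLog_one_sub, negMulLog, negMulLog]
    ring
  have hαk : α * k = 2 * r := by
    rw [hα, div_mul_cancel₀ _ (by positivity)]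
  obtain ⟨ht₁, ht₂, ht₃⟩ := hpos _ hhalf
  obtain ⟨hd₁, hd₂, hd₃⟩ := hdiff _ hhalf
  obtain ⟨hs₁, hs₂, hs₃⟩ := hsaddle _ hhalf
  rw [(hasDerivAt_saddleExponent hαk hhalf hd₁ hd₂ hd₃ ht₁.ne' ht₂.ne' ht₃.ne'
    (hfpos _ hhalf).ne' hs₁ hs₂ hs₃).deriv, thalf.1, thalf.2.1, thalf.2.2, log_pow]
  norm_num
  ring

/-- The exponent s(γ) = (1 − kα)(ln 2 + h(γ)) + α ln f(t₁(γ),t₂(γ),t₃(γ))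
− r(1−γ)(ln t₁(γ) + ln t₃(γ)) − rγ ln t₂(γ), where (t₁,t₂,t₃) solves the saddle
point equations a_f(t) = (k(1−γ)/2, kγ/2, k(1−γ)/2) and at γ = 1/2 equals
(x_k, x_k², x_k), has a critical point at γ = 1/2: ds/dγ|_{γ=1/2} = 0. -/
theorem stmt_18 (k r : ℕ) (hk : 3 ≤ k) (hr : 1 ≤ r) (α : ℝ) (hα : α = 2 * r / k)
    (f : ℝ → ℝ → ℝ → ℝ)
    (hf : ∀ x₁ x₂ x₃ : ℝ, f x₁ x₂ x₃
      = (1 + x₁ + x₂ + x₃) ^ k - (1 + x₁) ^ k - (1 + x₃) ^ k + 1)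
    (t₁ t₂ t₃ : ℝ → ℝ)
    (hpos : ∀ γ ∈ Set.Ioo (0:ℝ) 1, 0 < t₁ γ ∧ 0 < t₂ γ ∧ 0 < t₃ γ)
    (hdiff : ∀ γ ∈ Set.Ioo (0:ℝ) 1,
      DifferentiableAt ℝ t₁ γ ∧ DifferentiableAt ℝ t₂ γ ∧ DifferentiableAt ℝ t₃ γ)
    (hfpos : ∀ γ ∈ Set.Ioo (0:ℝ) 1, 0 < f (t₁ γ) (t₂ γ) (t₃ γ))
    (hsaddle : ∀ γ ∈ Set.Ioo (0:ℝ) 1,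
      t₁ γ * deriv (fun x => f x (t₂ γ) (t₃ γ)) (t₁ γ) / f (t₁ γ) (t₂ γ) (t₃ γ)
          = (k : ℝ) * (1 - γ) / 2 ∧
      t₂ γ * deriv (fun x => f (t₁ γ) x (t₃ γ)) (t₂ γ) / f (t₁ γ) (t₂ γ) (t₃ γ)
          = (k : ℝ) * γ / 2 ∧
      t₃ γ * deriv (fun x => f (t₁ γ) (t₂ γ) x) (t₃ γ) / f (t₁ γ) (t₂ γ) (t₃ γ)
          = (k : ℝ) * (1 - γ) / 2)
    (xk : ℝ) (hxk : 0 < xk)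
    (thalf : t₁ (1/2) = xk ∧ t₂ (1/2) = xk ^ 2 ∧ t₃ (1/2) = xk)
    (s : ℝ → ℝ)
    (hs : ∀ γ : ℝ, s γ
      = (1 - k * α) * (Real.log 2 + (-γ * Real.log γ - (1 - γ) * Real.log (1 - γ)))
        + α * Real.log (f (t₁ γ) (t₂ γ) (t₃ γ))
        - r * (1 - γ) * (Real.log (t₁ γ) + Real.log (t₃ γ))
        - r * γ * Real.log (t₂ γ)) :
    deriv s (1/2) = 0 :=
  stmt_18_general k r hk α hα f hf t₁ t₂ t₃ hpos hdiff hfpos hsaddle xk thalf s hs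
end
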